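/- arXiv:2403.20027 — 4 statements merged into one kernel-verified Lean document; each statement's English description precedes it below -/
import Mathlib

section
/- For a convex function f on [0,1], f(1/n) ≤ (1/n²) ∑ i f(p i) + ((n-1)/n²) ∑ i f(q i), where q i = (1 - p i)/(n-1). Equality holds when all p i = 1/n. -/
/-! Both `p` and `q i = (1 - p i) / (n - 1)` are probability vectors on `n` points, so each has
mean `1 / n`, and Jensen's inequality gives `f (1 / n) ≤ (1 / n) ∑ f (p i)` and
`f (1 / n) ≤ (1 / n) ∑ f (q i)`. The right-hand side is the convex combination of these two
averages with weights `1 / n` and `(n - 1) / n`. -/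

open Finset

theorem ConvexOn.map_inv_card_smul_sum_le {𝕜 E ι : Type*} [Field 𝕜] [LinearOrder 𝕜]
    [IsStrictOrderedRing 𝕜] [AddCommGroup E] [Module 𝕜 E] [Fintype ι] [Nonempty ι]
    {s : Set E} {f : E → 𝕜} (hf : ConvexOn 𝕜 s f) {x : ι → E} (hx : ∀ i, x i ∈ s) :
    f ((Fintype.card ι : 𝕜)⁻¹ • ∑ i, x i) ≤ (Fintype.card ι : 𝕜)⁻¹ * ∑ i, f (x i) := by
  have hcard : (0 : 𝕜) < Fintype.card ι := by exact_mod_cast Fintype.card_pos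
  have key := hf.map_sum_le (t := univ) (w := fun _ => (Fintype.card ι : 𝕜)⁻¹) (p := x)
    (fun _ _ => inv_nonneg.2 hcard.le) (by simp [card_univ, hcard.ne'])
    (fun i _ => hx i)
  simpa only [← smul_sum, smul_eq_mul, ← mul_sum] using key

theorem sum_one_sub_div_card_sub_one {𝕜 ι : Type*} [Field 𝕜] [Fintype ι] {p : ι → 𝕜}
    (hp : ∑ i, p i = 1) (hcard : (Fintype.card ι : 𝕜) ≠ 1) :
    ∑ i, (1 - p i) / ((Fintype.card ι : 𝕜) - 1) = 1 := by
  rw [← sum_div, sum_sub_distrib, hp, sum_const, card_univ, nsmul_one]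
  exact div_self (sub_ne_zero.2 hcard)

theorem jensen_sum_convex
    (n : ℕ) (hn : 2 ≤ n) (p : Fin n → ℝ)
    (hp : ∀ i, 0 ≤ p i ∧ p i ≤ 1) (hsum : ∑ i, p i = 1)
    (f : ℝ → ℝ) (hf : ConvexOn ℝ (Set.Icc (0 : ℝ) 1) f) :
    f (1 / (n : ℝ)) ≤
      (1 / (n : ℝ) ^ 2) * ∑ i, f (p i) +
        (((n : ℝ) - 1) / (n : ℝ) ^ 2) * ∑ i, f ((1 - p i) / ((n : ℝ) - 1)) ∧
    ((∀ i, p i = 1 / (n : ℝ)) →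
      f (1 / (n : ℝ)) =
        (1 / (n : ℝ) ^ 2) * ∑ i, f (p i) +
          (((n : ℝ) - 1) / (n : ℝ) ^ 2) * ∑ i, f ((1 - p i) / ((n : ℝ) - 1))) := by
  have hn2 : (2 : ℝ) ≤ n := by exact_mod_cast hn
  have hn1 : (0 : ℝ) < n - 1 := by linarith
  have : Nonempty (Fin n) := ⟨⟨0, by omega⟩⟩
  set q : Fin n → ℝ := fun i => (1 - p i) / ((n : ℝ) - 1)
  have hq : ∀ i, q i ∈ Set.Icc (0 : ℝ) 1 := fun i => by
    constructor
    · exact div_nonneg (by linarith [hp i]) hn1.le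
    · rw [div_le_one hn1]; linarith [hp i]
  have hqsum : ∑ i, q i = 1 := by
    simpa using sum_one_sub_div_card_sub_one (ι := Fin n) hsum (by rw [Fintype.card_fin]; linarith)
  have hjp := hf.map_inv_card_smul_sum_le fun i => Set.mem_Icc.2 (hp i)
  have hjq := hf.map_inv_card_smul_sum_le hq
  simp only [Fintype.card_fin, hsum, hqsum, smul_eq_mul, mul_one] at hjp hjq
  constructor
  · calc f (1 / n) = 1 / n * f (n : ℝ)⁻¹ + (n - 1) / n * f (n : ℝ)⁻¹ := by field_simp; ring
      _ ≤ 1 / n * ((n : ℝ)⁻¹ * ∑ i, f (p i)) + (n - 1) / n * ((n : ℝ)⁻¹ * ∑ i, f (q i)) := by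
        gcongr
      _ = _ := by ring
  · intro hp_eq
    have hq_eq : (1 - 1 / (n : ℝ)) / (n - 1) = 1 / n := by field_simp
    simp only [hp_eq, hq_eq, sum_const, card_univ, Fintype.card_fin, nsmul_eq_mul]
    field_simp
    ring
end

section
/- For any index i with q i > 0 and p j > 0 for all j ≠ i, the self-information of the negated probability satisfies -log(q i) ≤ (1/(n-1)) ∑_{j ≠ i} (-log p j), where q i = (1 - p i)/(n-1). -/
theorem self_information_negation_le
    (n : ℕ) (hn : 2 ≤ n) (p : Fin n → ℝ)
    (hp : ∀ j, 0 < p j ∧ p j ≤ 1) (hsum : ∑ i, p i = 1) :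
    ∀ i, -Real.log ((1 - p i) / ((n : ℝ) - 1)) ≤
      (1 / ((n : ℝ) - 1)) * ∑ j ∈ Finset.univ.erase i, -Real.log (p j) := by
  intro i
  have hn1 : (0 : ℝ) < (n : ℝ) - 1 := by
    have : (2 : ℝ) ≤ (n : ℝ) := by exact_mod_cast hn
    linarith
  have hcard : (Finset.univ.erase i).card = n - 1 := by
    simp [Finset.card_erase_of_mem]
  have hcardR : ((Finset.univ.erase i).card : ℝ) = (n : ℝ) - 1 := by
    rw [hcard]
    have : (1 : ℕ) ≤ n := by omega
    push_cast [Nat.cast_sub this]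
    ring
  have hsum' : ∑ j ∈ Finset.univ.erase i, p j = 1 - p i := by
    have h := Finset.add_sum_erase Finset.univ p (Finset.mem_univ i)
    rw [hsum] at h
    linarith
  have jensen := strictConcaveOn_log_Ioi.concaveOn.le_map_sum
    (t := Finset.univ.erase i) (w := fun _ => 1 / ((n : ℝ) - 1)) (p := p)
    (fun j _ => by positivity)
    (by rw [Finset.sum_const, nsmul_eq_mul, hcardR]; field_simp)
    (fun j _ => Set.mem_Ioi.mpr (hp j).1)
  simp only [smul_eq_mul] at jensen
  have heq : ∑ j ∈ Finset.univ.erase i, (1 / ((n : ℝ) - 1)) * p j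
      = (1 - p i) / ((n : ℝ) - 1) := by
    rw [← Finset.mul_sum, hsum']; ring
  rw [heq] at jensen
  have : (1 / ((n : ℝ) - 1)) * ∑ j ∈ Finset.univ.erase i, -Real.log (p j)
      = -∑ j ∈ Finset.univ.erase i, (1 / ((n : ℝ) - 1)) * Real.log (p j) := by
    rw [Finset.sum_neg_distrib, mul_neg, Finset.mul_sum]
  rw [this]
  linarith
end

section
/- The dissimilarity function I_α(p,q) = -log₂((1 + (1/2) ∑ i [min(p i, ((2^α - 1) p i + q i)/2^α) + min((p i + (2^α - 1) q i)/2^α, q i)])/2) satisfies 0 ≤ I_α(p,q) ≤ 1 for every α ∈ ℕ. -/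
theorem dissimilarity_bounds
    (n : ℕ) (p q : Fin n → ℝ)
    (hp : ∀ i, 0 ≤ p i) (hq : ∀ i, 0 ≤ q i)
    (hsp : ∑ i, p i = 1) (hsq : ∑ i, q i = 1) (α : ℕ) :
    0 ≤ -Real.logb 2 ((1 + (1 / 2) * ∑ i,
        (min (p i) ((((2 : ℝ) ^ α - 1) * p i + q i) / (2 : ℝ) ^ α) +
          min ((p i + ((2 : ℝ) ^ α - 1) * q i) / (2 : ℝ) ^ α) (q i))) / 2) ∧
      -Real.logb 2 ((1 + (1 / 2) * ∑ i,
        (min (p i) ((((2 : ℝ) ^ α - 1) * p i + q i) / (2 : ℝ) ^ α) +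
          min ((p i + ((2 : ℝ) ^ α - 1) * q i) / (2 : ℝ) ^ α) (q i))) / 2) ≤ 1 := by
  set S : ℝ := ∑ i,
      (min (p i) ((((2 : ℝ) ^ α - 1) * p i + q i) / (2 : ℝ) ^ α) +
        min ((p i + ((2 : ℝ) ^ α - 1) * q i) / (2 : ℝ) ^ α) (q i)) with hS
  have hpow : (1 : ℝ) ≤ (2 : ℝ) ^ α := one_le_pow₀ (by norm_num)
  have hpowpos : (0 : ℝ) < (2 : ℝ) ^ α := by positivity
  have hS0 : 0 ≤ S := by
    apply Finset.sum_nonneg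
    intro i _
    have h1 : 0 ≤ (((2 : ℝ) ^ α - 1) * p i + q i) / (2 : ℝ) ^ α := by
      apply div_nonneg _ hpowpos.le
      have := hp i; have := hq i; nlinarith
    have h2 : 0 ≤ (p i + ((2 : ℝ) ^ α - 1) * q i) / (2 : ℝ) ^ α := by
      apply div_nonneg _ hpowpos.le
      have := hp i; have := hq i; nlinarith
    exact add_nonneg (le_min (hp i) h1) (le_min h2 (hq i))
  have hS2 : S ≤ 2 := by
    have : S ≤ ∑ i, (p i + q i) := by
      apply Finset.sum_le_sum
      intro i _
      exact add_le_add (min_le_left _ _) (min_le_right _ _)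
    rw [Finset.sum_add_distrib, hsp, hsq] at this
    linarith
  set x : ℝ := (1 + (1 / 2) * S) / 2 with hx
  have hx1 : x ≤ 1 := by rw [hx]; linarith
  have hxh : (1/2 : ℝ) ≤ x := by rw [hx]; linarith
  have hxpos : (0 : ℝ) < x := by linarith
  have hle0 : Real.logb 2 x ≤ 0 := Real.logb_nonpos (by norm_num) hxpos.le hx1
  have hgem1 : (-1 : ℝ) ≤ Real.logb 2 x := by
    have := Real.logb_le_logb_of_le (b := 2) (by norm_num) (by norm_num) hxh
    have h2 : Real.logb 2 (1/2 : ℝ) = -1 := by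
      rw [show (1/2 : ℝ) = 2⁻¹ by norm_num, Real.logb_inv, Real.logb_self_eq_one] <;> norm_num
    linarith
  exact ⟨by linarith, by linarith⟩
end

section
/- I_α(p,q) = 0 if and only if p = q, where I_α(p,q) = -log₂((1 + (1/2) ∑ i [min(p i, ((2^α - 1) p i + q i)/2^α) + min((p i + (2^α - 1) q i)/2^α, q i)])/2). -/
theorem dissimilarity_eq_zero_iff
    (n : ℕ) (p q : Fin n → ℝ)
    (hp : ∀ i, 0 ≤ p i) (hq : ∀ i, 0 ≤ q i)
    (hsp : ∑ i, p i = 1) (hsq : ∑ i, q i = 1) (α : ℕ) :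
    -Real.logb 2 ((1 + (1 / 2) * ∑ i,
        (min (p i) ((((2 : ℝ) ^ α - 1) * p i + q i) / (2 : ℝ) ^ α) +
          min ((p i + ((2 : ℝ) ^ α - 1) * q i) / (2 : ℝ) ^ α) (q i))) / 2) = 0 ↔
      p = q := by
  have h2 : (0:ℝ) < 2 ^ α := by positivity
  have h2' : (1:ℝ) ≤ 2 ^ α := one_le_pow₀ (by norm_num)
  have key : ∀ i ∈ Finset.univ, min (p i) ((((2 : ℝ) ^ α - 1) * p i + q i) / (2 : ℝ) ^ α) +
          min ((p i + ((2 : ℝ) ^ α - 1) * q i) / (2 : ℝ) ^ α) (q i)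
        = p i + q i - |p i - q i| / 2 ^ α := by
    intro i _
    rcases le_total (p i) (q i) with h | h
    · rw [abs_of_nonpos (by linarith), min_eq_left, min_eq_left]
      · field_simp; ring
      · rw [div_le_iff₀ h2]; nlinarith
      · rw [le_div_iff₀ h2]; nlinarith
    · rw [abs_of_nonneg (by linarith), min_eq_right, min_eq_right]
      · field_simp; ring
      · rw [le_div_iff₀ h2]; nlinarith
      · rw [div_le_iff₀ h2]; nlinarith
  rw [Finset.sum_congr rfl key]
  have hsum : ∑ i, (p i + q i - |p i - q i| / 2 ^ α)
      = 2 - (∑ i, |p i - q i|) / 2 ^ α := by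
    rw [Finset.sum_sub_distrib, Finset.sum_add_distrib, hsp, hsq, ← Finset.sum_div]
    ring
  rw [hsum]
  set T := ∑ i, |p i - q i| with hT
  have hT0 : 0 ≤ T := Finset.sum_nonneg fun i _ => abs_nonneg _
  have hT2 : T ≤ 2 := by
    have h1 : T ≤ ∑ i, (p i + q i) := Finset.sum_le_sum fun i _ =>
      abs_le.mpr ⟨by linarith [hp i, hq i], by linarith [hp i, hq i]⟩
    rw [Finset.sum_add_distrib, hsp, hsq] at h1
    linarith
  have hTdiv : T / 2 ^ α ≤ 2 := by
    calc T / 2 ^ α ≤ T / 1 := by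
          apply div_le_div_of_nonneg_left hT0 one_pos h2'
        _ ≤ 2 := by simpa using hT2
  have hx : (0:ℝ) < (1 + 1 / 2 * (2 - T / 2 ^ α)) / 2 := by
    have : 0 ≤ T / 2 ^ α := by positivity
    linarith
  have hTiff : T = 0 ↔ p = q := by
    rw [hT, Finset.sum_eq_zero_iff_of_nonneg fun i _ => abs_nonneg _]
    constructor
    · intro h; funext i
      have := h i (Finset.mem_univ i)
      have := abs_eq_zero.mp this
      linarith
    · intro h; subst h; simp
  rw [neg_eq_zero, Real.logb_eq_zero]
  constructor
  · rintro (h | h | h | h | h | h) <;> try norm_num at h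
    · exact absurd h (by linarith)
    · rw [← hTiff]
      have : T / 2 ^ α = 0 := by linarith
      have := (div_eq_zero_iff.mp this).resolve_right (by positivity)
      exact this
    · exact absurd h (by linarith)
  · intro h
    have : T = 0 := hTiff.mpr h
    rw [this]
    norm_num
end
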